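/- arXiv:2005.12467 — 5 statements merged into one kernel-verified Lean document; each statement's English description precedes it below -/
import Mathlib

section
/- Define Φ : ℝ² → ℝ² by Φ(ξ) = (ξ₁√(1+ξ₂²) + ξ₂√(1+ξ₁²), ξ₂ − ξ₁) / (√(1+ξ₁²) + √(1+ξ₂²)). Then for every ξ = (ξ₁,ξ₂) ∈ ℝ², the point Φ(ξ) lies on the line ℓ^+_{(ξ₁,0)}, the spatial projection of the ruling of the hyperboloid through (φ((ξ₁,0)), ξ₁, 0), parametrized by t ↦ (ξ₁,0) + t(1+ξ₁², √(1+ξ₁²)) (since φ((ξ₁,0)) = √(1+ξ₁²)). -/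
/-!
With `a = √(1+ξ₁²)` and `b = √(1+ξ₂²)`, the first coordinate of `Φ(ξ)` is the weighted mean
`(ξ₁ b + ξ₂ a)/(a+b) = ξ₁ + (ξ₂ - ξ₁) a/(a+b)`, so the parameter `t = (ξ₂ - ξ₁)/(a(a+b))` matches
both coordinates once `a² = 1+ξ₁²`.
-/

theorem exists_weighted_mean_mem_line {a b x y : ℝ} (ha : a ≠ 0) (hab : a + b ≠ 0) :
    ∃ t : ℝ, (x * b + y * a) / (a + b) = x + t * a ^ 2 ∧ (y - x) / (a + b) = t * a := by
  refine ⟨(y - x) / (a * (a + b)), ?_, ?_⟩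
  · field_simp
    ring
  · field_simp

/-- `Φ(ξ)` lies on the projected ruling line `ℓ⁺_{(ξ₁,0)}`,
parametrized by `t ↦ (ξ₁,0) + t(1+ξ₁², √(1+ξ₁²))`. -/
theorem Phi_on_plus_ruling (ξ₁ ξ₂ : ℝ) :
    ∃ t : ℝ,
      (ξ₁ * Real.sqrt (1 + ξ₂ ^ 2) + ξ₂ * Real.sqrt (1 + ξ₁ ^ 2))
          / (Real.sqrt (1 + ξ₁ ^ 2) + Real.sqrt (1 + ξ₂ ^ 2))
        = ξ₁ + t * (1 + ξ₁ ^ 2) ∧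
      (ξ₂ - ξ₁) / (Real.sqrt (1 + ξ₁ ^ 2) + Real.sqrt (1 + ξ₂ ^ 2))
        = t * Real.sqrt (1 + ξ₁ ^ 2) := by
  have hsq : Real.sqrt (1 + ξ₁ ^ 2) ^ 2 = 1 + ξ₁ ^ 2 := Real.sq_sqrt (by positivity)
  have ha : Real.sqrt (1 + ξ₁ ^ 2) ≠ 0 := by positivity
  have hab : Real.sqrt (1 + ξ₁ ^ 2) + Real.sqrt (1 + ξ₂ ^ 2) ≠ 0 := by positivity
  simpa only [hsq] using exists_weighted_mean_mem_line (x := ξ₁) (y := ξ₂) ha hab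
end

section
/- Define Φ : ℝ² → ℝ² by Φ(ξ) = (ξ₁√(1+ξ₂²) + ξ₂√(1+ξ₁²), ξ₂ − ξ₁) / (√(1+ξ₁²) + √(1+ξ₂²)). Then for every ξ ∈ ℝ², Φ(ξ) lies on the line ℓ^−_{(ξ₂,0)} parametrized by t ↦ (ξ₂,0) + t(1+ξ₂², −√(1+ξ₂²)). -/
/-! Writing `a = √(1+ξ₁²)` and `b = √(1+ξ₂²)`, the first coordinate of `Φ(ξ)` is the weighted mean
`ξ₂ + (ξ₁ - ξ₂) b / (a + b)`, so `Φ(ξ) = (ξ₂, 0) + s (b, -1)` with `s = (ξ₁ - ξ₂) / (a + b)`.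
Since `b² = 1 + ξ₂²`, the direction `(b, -1)` is `(1 + ξ₂², -b) / b`. -/

theorem exists_eq_add_mul_and_div_eq_mul_neg {K : Type*} [Field K] {a b c : K} (x y : K)
    (hb : b ≠ 0) (hab : a + b ≠ 0) (hc : b ^ 2 = c) :
    ∃ t : K, (x * b + y * a) / (a + b) = y + t * c ∧ (y - x) / (a + b) = t * -b := by
  refine ⟨(x - y) / ((a + b) * b), ?_, ?_⟩
  · subst hc
    field_simp
    ring
  · field_simp
    ring

/-- `Φ(ξ)` lies on the projected ruling line `ℓ⁻_{(ξ₂,0)}`,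
parametrized by `t ↦ (ξ₂,0) + t(1+ξ₂², −√(1+ξ₂²))`. -/
theorem Phi_on_minus_ruling (ξ₁ ξ₂ : ℝ) :
    ∃ t : ℝ,
      (ξ₁ * Real.sqrt (1 + ξ₂ ^ 2) + ξ₂ * Real.sqrt (1 + ξ₁ ^ 2))
          / (Real.sqrt (1 + ξ₁ ^ 2) + Real.sqrt (1 + ξ₂ ^ 2))
        = ξ₂ + t * (1 + ξ₂ ^ 2) ∧
      (ξ₂ - ξ₁) / (Real.sqrt (1 + ξ₁ ^ 2) + Real.sqrt (1 + ξ₂ ^ 2))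
        = t * (-Real.sqrt (1 + ξ₂ ^ 2)) :=
  exists_eq_add_mul_and_div_eq_mul_neg ξ₁ ξ₂ (by positivity) (by positivity)
    (Real.sq_sqrt (by positivity))
end

section
/- For all ξ, ζ in the interior of Ω (where φ > 0), the Lorentz separation satisfies dist_L(ξ,ζ) ≤ C·|ξ − ζ| for ξ, ζ restricted to the disc |ξ|,|ζ| ≤ 1/10, for some absolute constant C. Equivalently, 2|1 + ξ₁ζ₁ − ξ₂ζ₂ − φ(ξ)φ(ζ)| ≤ C²·|ξ − ζ|². -/
/-!
Write `φ`, `ψ` for the square roots at `ξ` and `ζ`. Since `φ² = 1 + ξ₁² − ξ₂²` and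
`ψ² = 1 + ζ₁² − ζ₂²`, twice the defect `1 + ξ₁ζ₁ − ξ₂ζ₂ − φψ` equals
`(φ − ψ)² − (ξ₁ − ζ₁)² + (ξ₂ − ζ₂)²`, so it suffices to bound `(φ − ψ)²` by `|ξ − ζ|²`.
Near the origin `φ + ψ ≥ 1`, hence `|φ − ψ| ≤ |φ² − ψ²|`, and
`φ² − ψ² = (ξ₁ − ζ₁)(ξ₁ + ζ₁) − (ξ₂ − ζ₂)(ξ₂ + ζ₂)` is at most `|ξ − ζ| |ξ + ζ| ≤ |ξ − ζ|`
by Cauchy–Schwarz.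
-/

lemma sq_mul_sub_mul_le (a b c d : ℝ) :
    (a * b - c * d) ^ 2 ≤ (a ^ 2 + c ^ 2) * (b ^ 2 + d ^ 2) := by
  nlinarith [sq_nonneg (a * d + c * b)]

lemma sq_sub_le_sq_sub_sq {φ ψ : ℝ} (h : 1 ≤ φ + ψ) : (φ - ψ) ^ 2 ≤ (φ ^ 2 - ψ ^ 2) ^ 2 := by
  have hfactor : (φ ^ 2 - ψ ^ 2) ^ 2 = (φ - ψ) ^ 2 * (φ + ψ) ^ 2 := by ring
  rw [hfactor]
  exact le_mul_of_one_le_right (sq_nonneg _) (one_le_pow₀ h)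

lemma add_sq_add_add_sq_le_one {ξ₁ ξ₂ ζ₁ ζ₂ : ℝ} (hξ : ξ₁ ^ 2 + ξ₂ ^ 2 ≤ 1 / 4)
    (hζ : ζ₁ ^ 2 + ζ₂ ^ 2 ≤ 1 / 4) : (ξ₁ + ζ₁) ^ 2 + (ξ₂ + ζ₂) ^ 2 ≤ 1 := by
  nlinarith [sq_nonneg (ξ₁ - ζ₁), sq_nonneg (ξ₂ - ζ₂)]

lemma one_le_add_of_sq_eq {φ ψ ξ₁ ξ₂ ζ₁ ζ₂ : ℝ} (hφ₀ : 0 ≤ φ) (hψ₀ : 0 ≤ ψ)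
    (hφ : φ ^ 2 = 1 + ξ₁ ^ 2 - ξ₂ ^ 2) (hψ : ψ ^ 2 = 1 + ζ₁ ^ 2 - ζ₂ ^ 2)
    (hξ : ξ₁ ^ 2 + ξ₂ ^ 2 ≤ 1 / 4) (hζ : ζ₁ ^ 2 + ζ₂ ^ 2 ≤ 1 / 4) : 1 ≤ φ + ψ := by
  nlinarith [sq_nonneg ξ₁, sq_nonneg ζ₁]

lemma sq_sub_le_of_sq_eq {φ ψ ξ₁ ξ₂ ζ₁ ζ₂ : ℝ} (hφ₀ : 0 ≤ φ) (hψ₀ : 0 ≤ ψ)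
    (hφ : φ ^ 2 = 1 + ξ₁ ^ 2 - ξ₂ ^ 2) (hψ : ψ ^ 2 = 1 + ζ₁ ^ 2 - ζ₂ ^ 2)
    (hξ : ξ₁ ^ 2 + ξ₂ ^ 2 ≤ 1 / 4) (hζ : ζ₁ ^ 2 + ζ₂ ^ 2 ≤ 1 / 4) :
    (φ - ψ) ^ 2 ≤ (ξ₁ - ζ₁) ^ 2 + (ξ₂ - ζ₂) ^ 2 := by
  have hdiff : φ ^ 2 - ψ ^ 2 = (ξ₁ - ζ₁) * (ξ₁ + ζ₁) - (ξ₂ - ζ₂) * (ξ₂ + ζ₂) := by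
    rw [hφ, hψ]; ring
  calc (φ - ψ) ^ 2
      ≤ (φ ^ 2 - ψ ^ 2) ^ 2 :=
        sq_sub_le_sq_sub_sq (one_le_add_of_sq_eq hφ₀ hψ₀ hφ hψ hξ hζ)
    _ ≤ ((ξ₁ - ζ₁) ^ 2 + (ξ₂ - ζ₂) ^ 2) * ((ξ₁ + ζ₁) ^ 2 + (ξ₂ + ζ₂) ^ 2) :=
        hdiff ▸ sq_mul_sub_mul_le _ _ _ _
    _ ≤ (ξ₁ - ζ₁) ^ 2 + (ξ₂ - ζ₂) ^ 2 :=
        mul_le_of_le_one_right (by positivity) (add_sq_add_add_sq_le_one hξ hζ)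

lemma abs_lorentz_defect_le {φ ψ ξ₁ ξ₂ ζ₁ ζ₂ : ℝ} (hφ₀ : 0 ≤ φ) (hψ₀ : 0 ≤ ψ)
    (hφ : φ ^ 2 = 1 + ξ₁ ^ 2 - ξ₂ ^ 2) (hψ : ψ ^ 2 = 1 + ζ₁ ^ 2 - ζ₂ ^ 2)
    (hξ : ξ₁ ^ 2 + ξ₂ ^ 2 ≤ 1 / 4) (hζ : ζ₁ ^ 2 + ζ₂ ^ 2 ≤ 1 / 4) :
    |1 + ξ₁ * ζ₁ - ξ₂ * ζ₂ - φ * ψ| ≤ (ξ₁ - ζ₁) ^ 2 + (ξ₂ - ζ₂) ^ 2 := by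
  have hdefect : 2 * (1 + ξ₁ * ζ₁ - ξ₂ * ζ₂ - φ * ψ)
      = (φ - ψ) ^ 2 - (ξ₁ - ζ₁) ^ 2 + (ξ₂ - ζ₂) ^ 2 := by
    linear_combination -hφ - hψ
  have hroots := sq_sub_le_of_sq_eq hφ₀ hψ₀ hφ hψ hξ hζ
  rw [abs_le]
  constructor <;>
    nlinarith [sq_nonneg (φ - ψ), sq_nonneg (ξ₁ - ζ₁), sq_nonneg (ξ₂ - ζ₂)]

/-- On the disc `|ξ|, |ζ| ≤ 1/10` (inside the interior of `Ω`), the Lorentz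
separation satisfies `dist_L(ξ,ζ) ≤ C|ξ − ζ|` for an absolute constant `C`. -/
theorem lorentz_separation_le_dist :
    ∃ C : ℝ, C > 0 ∧ ∀ ξ₁ ξ₂ ζ₁ ζ₂ : ℝ,
      1 + ξ₁ ^ 2 - ξ₂ ^ 2 > 0 → 1 + ζ₁ ^ 2 - ζ₂ ^ 2 > 0 →
      Real.sqrt (ξ₁ ^ 2 + ξ₂ ^ 2) ≤ 1 / 10 → Real.sqrt (ζ₁ ^ 2 + ζ₂ ^ 2) ≤ 1 / 10 →
      Real.sqrt (2 * |1 + ξ₁ * ζ₁ - ξ₂ * ζ₂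
          - Real.sqrt (1 + ξ₁ ^ 2 - ξ₂ ^ 2) * Real.sqrt (1 + ζ₁ ^ 2 - ζ₂ ^ 2)|)
        ≤ C * Real.sqrt ((ξ₁ - ζ₁) ^ 2 + (ξ₂ - ζ₂) ^ 2) := by
  refine ⟨Real.sqrt 2, by positivity, fun ξ₁ ξ₂ ζ₁ ζ₂ hφ hψ hξ hζ => ?_⟩
  have sq_add_sq_le {x y : ℝ} (h : Real.sqrt (x ^ 2 + y ^ 2) ≤ 1 / 10) : x ^ 2 + y ^ 2 ≤ 1 / 4 := by
    have := (Real.sqrt_le_left (by norm_num)).mp h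
    linarith
  have hdefect := abs_lorentz_defect_le (Real.sqrt_nonneg _) (Real.sqrt_nonneg _)
    (Real.sq_sqrt hφ.le) (Real.sq_sqrt hψ.le) (sq_add_sq_le hξ) (sq_add_sq_le hζ)
  rw [← Real.sqrt_mul zero_le_two]
  gcongr
end

section
/- Let (τ,ξ) lie on the hyperboloid τ² = 1 + ξ₁² − ξ₂², and suppose (τ',ξ') is another point on the hyperboloid with ⟦(τ,ξ)−(τ',ξ')⟧ = 0 and (τ',ξ') ≠ (τ,ξ). Then (τ',ξ') lies on one of the two rulings through (τ,ξ): there exist t ∈ ℝ and a sign ± with (τ',ξ') = (τ,ξ) + t(ξ₁τ ∓ ξ₂, 1+ξ₁², ξ₁ξ₂ ± τ). -/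
/-!
Write the chord as `(a, b, c) = (τ', ξ₁', ξ₂') - (τ, ξ₁, ξ₂)`. Being null means `a² + c² = b²`, and
subtracting the two hyperboloid equations then gives `aτ + cξ₂ = bξ₁`. By Lagrange's identity
`(cτ - aξ₂)² + (aτ + cξ₂)² = (a² + c²)(τ² + ξ₂²)`, so `(cτ - aξ₂)² = b²(τ² + ξ₂² - ξ₁²) = b²`,
i.e. `cτ - aξ₂ = ±b`. Together with `aτ + cξ₂ = bξ₁` this is a linear system for `(a, c)` with
determinant `τ² + ξ₂² = 1 + ξ₁² > 0`, whose solution is the ruling direction scaled by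
`t = b / (1 + ξ₁²)`; the sign of `cτ - aξ₂` selects the ruling.
-/

section Hyperboloid

variable {τ ξ₁ ξ₂ a b c : ℝ}

lemma lorentz_dot_eq_of_null_chord {τ' ξ₁' ξ₂' : ℝ}
    (h : τ ^ 2 = 1 + ξ₁ ^ 2 - ξ₂ ^ 2) (h' : τ' ^ 2 = 1 + ξ₁' ^ 2 - ξ₂' ^ 2)
    (hnull : (τ - τ') ^ 2 - (ξ₁ - ξ₁') ^ 2 + (ξ₂ - ξ₂') ^ 2 = 0) :
    (τ' - τ) * τ + (ξ₂' - ξ₂) * ξ₂ = (ξ₁' - ξ₁) * ξ₁ := by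
  linear_combination (h' - h) / 2 - hnull / 2

lemma sq_cross_eq_sq_of_null (h : τ ^ 2 = 1 + ξ₁ ^ 2 - ξ₂ ^ 2) (hnull : a ^ 2 + c ^ 2 = b ^ 2)
    (hdot : a * τ + c * ξ₂ = b * ξ₁) :
    (c * τ - a * ξ₂) ^ 2 = b ^ 2 := by
  linear_combination b ^ 2 * h + (τ ^ 2 + ξ₂ ^ 2) * hnull - (a * τ + c * ξ₂ + b * ξ₁) * hdot

lemma eq_smul_ruling_direction (s : ℝ) (h : τ ^ 2 = 1 + ξ₁ ^ 2 - ξ₂ ^ 2)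
    (hdot : a * τ + c * ξ₂ = b * ξ₁) (hcross : c * τ - a * ξ₂ = s * b) :
    a = b / (1 + ξ₁ ^ 2) * (ξ₁ * τ - s * ξ₂) ∧ b = b / (1 + ξ₁ ^ 2) * (1 + ξ₁ ^ 2) ∧
      c = b / (1 + ξ₁ ^ 2) * (ξ₁ * ξ₂ + s * τ) := by
  have hpos : (1 + ξ₁ ^ 2) ≠ 0 := by positivity
  refine ⟨?_, (div_mul_cancel₀ b hpos).symm, ?_⟩ <;> field_simp
  · linear_combination τ * hdot - ξ₂ * hcross - a * h
  · linear_combination ξ₂ * hdot + τ * hcross - c * h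

end Hyperboloid

theorem null_separated_points_share_ruling_general (τ ξ₁ ξ₂ τ' ξ₁' ξ₂' : ℝ)
    (h : τ ^ 2 = 1 + ξ₁ ^ 2 - ξ₂ ^ 2) (h' : τ' ^ 2 = 1 + ξ₁' ^ 2 - ξ₂' ^ 2)
    (hnull : Real.sqrt |(τ - τ') ^ 2 - (ξ₁ - ξ₁') ^ 2 + (ξ₂ - ξ₂') ^ 2| = 0) :
    ∃ t : ℝ,
      (τ' = τ + t * (ξ₁ * τ - ξ₂) ∧ ξ₁' = ξ₁ + t * (1 + ξ₁ ^ 2) ∧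
        ξ₂' = ξ₂ + t * (ξ₁ * ξ₂ + τ)) ∨
      (τ' = τ + t * (ξ₁ * τ + ξ₂) ∧ ξ₁' = ξ₁ + t * (1 + ξ₁ ^ 2) ∧
        ξ₂' = ξ₂ + t * (ξ₁ * ξ₂ - τ)) := by
  have hnull : (τ - τ') ^ 2 - (ξ₁ - ξ₁') ^ 2 + (ξ₂ - ξ₂') ^ 2 = 0 := by simpa using hnull
  have hdot := lorentz_dot_eq_of_null_chord h h' hnull
  have hcross := sq_cross_eq_sq_of_null h (by linear_combination hnull) hdot
  refine ⟨(ξ₁' - ξ₁) / (1 + ξ₁ ^ 2), ?_⟩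
  rcases sq_eq_sq_iff_eq_or_eq_neg.mp hcross with hplus | hminus
  · obtain ⟨ha, hb, hc⟩ := eq_smul_ruling_direction 1 h hdot (by linear_combination hplus)
    exact Or.inl ⟨by linear_combination ha, by linear_combination hb, by linear_combination hc⟩
  · obtain ⟨ha, hb, hc⟩ := eq_smul_ruling_direction (-1) h hdot (by linear_combination hminus)
    exact Or.inr ⟨by linear_combination ha, by linear_combination hb, by linear_combination hc⟩

/-- Two distinct points of the hyperboloid whose difference has Lorentz norm
zero lie on a common ruling. -/
theorem null_separated_points_share_ruling (τ ξ₁ ξ₂ τ' ξ₁' ξ₂' : ℝ)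
    (h : τ ^ 2 = 1 + ξ₁ ^ 2 - ξ₂ ^ 2) (h' : τ' ^ 2 = 1 + ξ₁' ^ 2 - ξ₂' ^ 2)
    (hnull : Real.sqrt |(τ - τ') ^ 2 - (ξ₁ - ξ₁') ^ 2 + (ξ₂ - ξ₂') ^ 2| = 0)
    (hne : (τ', ξ₁', ξ₂') ≠ (τ, ξ₁, ξ₂)) :
    ∃ t : ℝ,
      (τ' = τ + t * (ξ₁ * τ - ξ₂) ∧ ξ₁' = ξ₁ + t * (1 + ξ₁ ^ 2) ∧
        ξ₂' = ξ₂ + t * (ξ₁ * ξ₂ + τ)) ∨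
      (τ' = τ + t * (ξ₁ * τ + ξ₂) ∧ ξ₁' = ξ₁ + t * (1 + ξ₁ ^ 2) ∧
        ξ₂' = ξ₂ + t * (ξ₁ * ξ₂ - τ)) :=
  null_separated_points_share_ruling_general τ ξ₁ ξ₂ τ' ξ₁' ξ₂' h h' hnull
end

section
/- Let φ(ξ) = √(1+ξ₁²−ξ₂²) and ξ, ζ in the interior of Ω. Then the quantity ⟨(∇²φ(ξ))⁻¹(∇φ(ξ)−∇φ(ζ)), ∇φ(ξ)−∇φ(ζ)⟩ equals, up to sign and a factor φ(ξ)/φ(ζ)², the product |1 + ξ₁ζ₁ − ξ₂ζ₂ − φ(ξ)φ(ζ)| · |ξ₁ζ₁ − ξ₂ζ₂ − φ(ξ)φ(ζ) − 1|. Precisely: |⟨(∇²φ(ξ))⁻¹(∇φ(ξ)−∇φ(ζ)), ∇φ(ξ)−∇φ(ζ)⟩| = (φ(ξ)/φ(ζ)²)·|1+ξ₁ζ₁−ξ₂ζ₂−φ(ξ)φ(ζ)|·|ξ₁ζ₁−ξ₂ζ₂−φ(ξ)φ(ζ)−1|. -/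
open Matrix

noncomputable def hypPhi : ℝ × ℝ → ℝ := fun η => Real.sqrt (1 + η.1 ^ 2 - η.2 ^ 2)

/-- The gradient of `hypPhi`. -/
noncomputable def hypGrad (η : ℝ × ℝ) : Fin 2 → ℝ :=
  ![fderiv ℝ hypPhi η (1, 0), fderiv ℝ hypPhi η (0, 1)]

/-- The Hessian matrix of `hypPhi`. -/
noncomputable def hypHess (η : ℝ × ℝ) : Matrix (Fin 2) (Fin 2) ℝ :=
  !![fderiv ℝ (fun x => fderiv ℝ hypPhi x (1, 0)) η (1, 0),
     fderiv ℝ (fun x => fderiv ℝ hypPhi x (0, 1)) η (1, 0);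
     fderiv ℝ (fun x => fderiv ℝ hypPhi x (1, 0)) η (0, 1),
     fderiv ℝ (fun x => fderiv ℝ hypPhi x (0, 1)) η (0, 1)]

/-!
`φ` is the height of the hyperboloid `p² = 1 + a² - b²` over `(a, b)`, so with the Lorentz pairing
`⟨η, w⟩ = η₁ w₁ - η₂ w₂` one has `∇φ(η) = (η₁, -η₂) / φ(η)` and
`∇²φ(η) = φ(η)⁻³ M(η)`, where `M(η)` has an explicit inverse up to the factor `φ(η)²`.
For the lifted points `(ξ, φ ξ)`, `(ζ, φ ζ)` put `s = ξ₁ζ₁ - ξ₂ζ₂ - φ(ξ)φ(ζ)`. Using the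
hyperboloid equations, the quadratic form of `(∇²φ(ξ))⁻¹` on `∇φ(ξ) - ∇φ(ζ)` collapses to
`φ(ξ) (s² - 1) / φ(ζ)²`, and `s² - 1 = (1 + s)(s - 1)`.
-/

noncomputable def lorentzForm (η : ℝ × ℝ) : ℝ × ℝ →L[ℝ] ℝ :=
  η.1 • ContinuousLinearMap.fst ℝ ℝ ℝ - η.2 • ContinuousLinearMap.snd ℝ ℝ ℝ

@[simp]
lemma lorentzForm_apply (η w : ℝ × ℝ) : lorentzForm η w = η.1 * w.1 - η.2 * w.2 := by
  simp [lorentzForm]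

lemma lorentzForm_comm (η w : ℝ × ℝ) : lorentzForm η w = lorentzForm w η := by
  simp only [lorentzForm_apply]
  ring

-- The second factor is minus the adjugate of the first.
lemma lorentz_matrix_mul_eq_smul_one {R : Type*} [CommRing R] (a b : R) :
    !![1 - b ^ 2, a * b; a * b, -(1 + a ^ 2)] * !![1 + a ^ 2, a * b; a * b, b ^ 2 - 1]
      = (1 + a ^ 2 - b ^ 2) • (1 : Matrix (Fin 2) (Fin 2) R) := by
  ext i j
  fin_cases i <;> fin_cases j <;> simp [Matrix.mul_apply] <;> ring

section hypPhi

variable {η : ℝ × ℝ}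

lemma hypPhi_pos (hη : 0 < 1 + η.1 ^ 2 - η.2 ^ 2) : 0 < hypPhi η :=
  Real.sqrt_pos.2 hη

lemma hypPhi_sq (hη : 0 < 1 + η.1 ^ 2 - η.2 ^ 2) : hypPhi η ^ 2 = 1 + η.1 ^ 2 - η.2 ^ 2 :=
  Real.sq_sqrt hη.le

lemma hasFDerivAt_hypPhi (hη : 0 < 1 + η.1 ^ 2 - η.2 ^ 2) :
    HasFDerivAt hypPhi ((hypPhi η)⁻¹ • lorentzForm η) η := by
  have hfst : HasFDerivAt (fun x : ℝ × ℝ => x.1) (ContinuousLinearMap.fst ℝ ℝ ℝ) η :=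
    hasFDerivAt_fst
  have hsnd : HasFDerivAt (fun x : ℝ × ℝ => x.2) (ContinuousLinearMap.snd ℝ ℝ ℝ) η :=
    hasFDerivAt_snd
  have hQ : HasFDerivAt (fun x : ℝ × ℝ => 1 + x.1 ^ 2 - x.2 ^ 2) ((2 : ℝ) • lorentzForm η) η := by
    refine (((hfst.pow 2).const_add 1).sub (hsnd.pow 2)).congr_fderiv ?_
    ext <;> simp
  refine (hQ.sqrt hη.ne').congr_fderiv ?_
  rw [smul_smul, hypPhi]
  field_simp

lemma fderiv_hypPhi_apply (hη : 0 < 1 + η.1 ^ 2 - η.2 ^ 2) (w : ℝ × ℝ) :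
    fderiv ℝ hypPhi η w = lorentzForm η w / hypPhi η := by
  rw [(hasFDerivAt_hypPhi hη).fderiv, _root_.smul_apply, smul_eq_mul, inv_mul_eq_div]

lemma hypGrad_eq (hη : 0 < 1 + η.1 ^ 2 - η.2 ^ 2) :
    hypGrad η = ![η.1 / hypPhi η, -η.2 / hypPhi η] := by
  simp [hypGrad, fderiv_hypPhi_apply hη]

lemma hasFDerivAt_fderiv_hypPhi_apply (hη : 0 < 1 + η.1 ^ 2 - η.2 ^ 2) (w : ℝ × ℝ) :
    HasFDerivAt (fun x => fderiv ℝ hypPhi x w)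
      ((hypPhi η)⁻¹ • lorentzForm w - (lorentzForm η w / hypPhi η ^ 3) • lorentzForm η) η := by
  have hopen : IsOpen {x : ℝ × ℝ | 0 < 1 + x.1 ^ 2 - x.2 ^ 2} :=
    isOpen_lt continuous_const (by fun_prop)
  have hloc : (fun x => lorentzForm w x * (hypPhi x)⁻¹) =ᶠ[nhds η]
      fun x => fderiv ℝ hypPhi x w := by
    filter_upwards [hopen.mem_nhds hη] with x hx
    rw [fderiv_hypPhi_apply hx, lorentzForm_comm, div_eq_mul_inv]
  have hinv := (hasDerivAt_inv (hypPhi_pos hη).ne').comp_hasFDerivAt η (hasFDerivAt_hypPhi hη)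
  refine (((lorentzForm w).hasFDerivAt.mul hinv).congr_of_eventuallyEq hloc.symm).congr_fderiv ?_
  ext <;> simp <;> field_simp <;> ring

lemma fderiv_fderiv_hypPhi_apply (hη : 0 < 1 + η.1 ^ 2 - η.2 ^ 2) (w v : ℝ × ℝ) :
    fderiv ℝ (fun x => fderiv ℝ hypPhi x w) η v
      = (hypPhi η ^ 2 * lorentzForm w v - lorentzForm η w * lorentzForm η v) / hypPhi η ^ 3 := by
  rw [(hasFDerivAt_fderiv_hypPhi_apply hη w).fderiv]
  have := (hypPhi_pos hη).ne'
  simp only [_root_.sub_apply, _root_.smul_apply, smul_eq_mul]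
  field_simp

lemma hypHess_eq (hη : 0 < 1 + η.1 ^ 2 - η.2 ^ 2) :
    hypHess η = (hypPhi η ^ 3)⁻¹ •
      !![1 - η.2 ^ 2, η.1 * η.2; η.1 * η.2, -(1 + η.1 ^ 2)] := by
  ext i j
  fin_cases i <;> fin_cases j <;>
    simp [hypHess, fderiv_fderiv_hypPhi_apply hη, hypPhi_sq hη] <;> field_simp <;> ring

lemma inv_hypHess (hη : 0 < 1 + η.1 ^ 2 - η.2 ^ 2) :
    (hypHess η)⁻¹ = hypPhi η • !![1 + η.1 ^ 2, η.1 * η.2; η.1 * η.2, η.2 ^ 2 - 1] := by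
  apply Matrix.inv_eq_right_inv
  have := (hypPhi_pos hη).ne'
  rw [hypHess_eq hη, smul_mul_smul_comm, lorentz_matrix_mul_eq_smul_one, ← hypPhi_sq hη,
    smul_smul]
  field_simp
  rw [one_smul]

end hypPhi

lemma dotProduct_mulVec_lorentz_matrix {R : Type*} [CommRing R] (a b : R) (u : Fin 2 → R) :
    u ⬝ᵥ (!![1 + a ^ 2, a * b; a * b, b ^ 2 - 1] *ᵥ u)
      = (a * u 0 + b * u 1) ^ 2 + u 0 ^ 2 - u 1 ^ 2 := by
  simp [dotProduct, mulVec, Fin.sum_univ_two]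
  ring

lemma hyperboloid_gradient_identity {a b c d p q : ℝ} (hp : p ^ 2 = 1 + a ^ 2 - b ^ 2)
    (hq : q ^ 2 = 1 + c ^ 2 - d ^ 2) (hp0 : p ≠ 0) (hq0 : q ≠ 0) :
    (a * (a / p - c / q) + b * (-b / p - -d / q)) ^ 2
        + (a / p - c / q) ^ 2 - (-b / p - -d / q) ^ 2
      = (1 + a * c - b * d - p * q) * (a * c - b * d - p * q - 1) / q ^ 2 := by
  set s := a * c - b * d - p * q
  have hlin : a * (a / p - c / q) + b * (-b / p - -d / q) = -(1 / p + s / q) := by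
    field_simp
    linear_combination -q * hp
  have hquad : (a / p - c / q) ^ 2 - (-b / p - -d / q) ^ 2
      = -(1 / p ^ 2 + 2 * s / (p * q) + 1 / q ^ 2) := by
    field_simp
    linear_combination -q ^ 2 * hp - p ^ 2 * hq
  rw [add_sub_assoc, hlin, hquad]
  field_simp
  ring

theorem transversality_eq_lorentz_separation_general (ξ₁ ξ₂ ζ₁ ζ₂ : ℝ)
    (hξ : 1 + ξ₁ ^ 2 - ξ₂ ^ 2 > 0) (hζ : 1 + ζ₁ ^ 2 - ζ₂ ^ 2 > 0) :
    |(hypGrad (ξ₁, ξ₂) - hypGrad (ζ₁, ζ₂)) ⬝ᵥ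
        ((hypHess (ξ₁, ξ₂))⁻¹ *ᵥ (hypGrad (ξ₁, ξ₂) - hypGrad (ζ₁, ζ₂)))|
      = (hypPhi (ξ₁, ξ₂) / (hypPhi (ζ₁, ζ₂)) ^ 2)
        * |1 + ξ₁ * ζ₁ - ξ₂ * ζ₂ - hypPhi (ξ₁, ξ₂) * hypPhi (ζ₁, ζ₂)|
        * |ξ₁ * ζ₁ - ξ₂ * ζ₂ - hypPhi (ξ₁, ξ₂) * hypPhi (ζ₁, ζ₂) - 1| := by
  have hp := hypPhi_pos (η := (ξ₁, ξ₂)) hξ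
  have hq := hypPhi_pos (η := (ζ₁, ζ₂)) hζ
  rw [inv_hypHess hξ, hypGrad_eq hξ, hypGrad_eq hζ, smul_mulVec, dotProduct_smul,
    dotProduct_mulVec_lorentz_matrix]
  simp only [Pi.sub_apply, cons_val_zero, cons_val_one, cons_val_fin_one]
  rw [hyperboloid_gradient_identity (hypPhi_sq hξ) (hypPhi_sq hζ) hp.ne' hq.ne', smul_eq_mul,
    abs_mul, abs_div, abs_mul, abs_of_pos hp, abs_of_pos (pow_pos hq 2)]
  ring

/-- The transversality quantity `⟨(∇²φ(ξ))⁻¹(∇φ(ξ)−∇φ(ζ)), ∇φ(ξ)−∇φ(ζ)⟩`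
equals in absolute value
`(φ(ξ)/φ(ζ)²)·|1+ξ₁ζ₁−ξ₂ζ₂−φ(ξ)φ(ζ)|·|ξ₁ζ₁−ξ₂ζ₂−φ(ξ)φ(ζ)−1|`. -/
theorem transversality_eq_lorentz_separation (ξ₁ ξ₂ ζ₁ ζ₂ : ℝ)
    (hξ : 1 + ξ₁ ^ 2 - ξ₂ ^ 2 > 0) (hζ : 1 + ζ₁ ^ 2 - ζ₂ ^ 2 > 0)
    (hinv : IsUnit (hypHess (ξ₁, ξ₂))) :
    |(hypGrad (ξ₁, ξ₂) - hypGrad (ζ₁, ζ₂)) ⬝ᵥ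
        ((hypHess (ξ₁, ξ₂))⁻¹ *ᵥ (hypGrad (ξ₁, ξ₂) - hypGrad (ζ₁, ζ₂)))|
      = (hypPhi (ξ₁, ξ₂) / (hypPhi (ζ₁, ζ₂)) ^ 2)
        * |1 + ξ₁ * ζ₁ - ξ₂ * ζ₂ - hypPhi (ξ₁, ξ₂) * hypPhi (ζ₁, ζ₂)|
        * |ξ₁ * ζ₁ - ξ₂ * ζ₂ - hypPhi (ξ₁, ξ₂) * hypPhi (ζ₁, ζ₂) - 1| :=
  transversality_eq_lorentz_separation_general ξ₁ ξ₂ ζ₁ ζ₂ hξ hζ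
end
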